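/- Let 0 < J < U and ε > 0. There exists c = c(ε,J,U) > 0 such that for every finite subgraph Ω of 𝕃, every increasing event A on pairs (ω_τ,ω_{ττ'}), and every β₀ ∈ [ε, ε^{−1}], the function β ↦ ATRC^{1,1}_{Ω,βJ,βU}[A] is differentiable at β₀ with derivative at least c · Σ_{e∈E_Ω} ( Cov[1_A, ω_τ(e)] + Cov[1_A, ω_{ττ'}(e)] ), where the covariances are taken under ATRC^{1,1}_{Ω,β₀J,β₀U}. -/

import Mathlib

open scoped Classical BigOperators

noncomputable section

namespace ATRCPaper

/-- A vertex of the lattice `𝕃` (even coordinate sum). -/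
def isLV (p : ℤ × ℤ) : Prop := (p.1 + p.2) % 2 = 0

/-- Diagonal adjacency in `ℤ²`. -/
def adjL (u v : ℤ × ℤ) : Prop := (u.1 - v.1).natAbs = 1 ∧ (u.2 - v.2).natAbs = 1

/-- The lattice `𝕃` as a graph on `ℤ²`. -/
def LGraph : SimpleGraph (ℤ × ℤ) where
  Adj u v := isLV u ∧ isLV v ∧ adjL u v
  symm := ⟨by
    rintro u v ⟨h1, h2, h3, h4⟩
    refine ⟨h2, h1, ?_, ?_⟩ <;> omega⟩
  loopless := ⟨by
    rintro u ⟨-, -, h, -⟩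
    omega⟩

/-- A finite subgraph of `𝕃`. -/
structure FinSubL where
  verts : Finset (ℤ × ℤ)
  edges : Finset (Sym2 (ℤ × ℤ))
  verts_mem : ∀ v ∈ verts, isLV v
  edges_mem : ∀ e ∈ edges, e ∈ LGraph.edgeSet
  edges_sub : ∀ e ∈ edges, ∀ v ∈ e, v ∈ verts

/-- A percolation configuration on the edges of `Ω`. -/
abbrev Cfg (Ω : FinSubL) := Ω.edges → Bool

/-- The spanning subgraph of open edges of a configuration. -/
def openGraph (Ω : FinSubL) (ω : Cfg Ω) : SimpleGraph (ℤ × ℤ) where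
  Adj u v := u ≠ v ∧ ∃ e : Ω.edges, ω e = true ∧ (e : Sym2 (ℤ × ℤ)) = s(u, v)
  symm := ⟨by
    rintro u v ⟨huv, e, he, hev⟩
    exact ⟨huv.symm, e, he, hev.trans (Sym2.eq_swap)⟩⟩
  loopless := ⟨fun u h => h.1 rfl⟩

/-- Wiring a graph on a set `B`: all vertices of `B` are identified (as a clique). -/
def wireGraph (G : SimpleGraph (ℤ × ℤ)) (B : Set (ℤ × ℤ)) : SimpleGraph (ℤ × ℤ) where
  Adj u v := u ≠ v ∧ (G.Adj u v ∨ (u ∈ B ∧ v ∈ B))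
  symm := ⟨by
    rintro u v ⟨huv, h | h⟩
    · exact ⟨huv.symm, Or.inl h.symm⟩
    · exact ⟨huv.symm, Or.inr ⟨h.2, h.1⟩⟩⟩
  loopless := ⟨fun u h => h.1 rfl⟩

/-- Number of clusters of `ω` in `Ω` (free boundary conditions). -/
def kFree (Ω : FinSubL) (ω : Cfg Ω) : ℕ :=
  Nat.card ((openGraph Ω ω).comap (Subtype.val : Ω.verts → ℤ × ℤ)).ConnectedComponent

/-- Number of clusters of `ω` in `Ω` after identifying all vertices of `B`. -/
def kWired (Ω : FinSubL) (B : Set (ℤ × ℤ)) (ω : Cfg Ω) : ℕ :=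
  Nat.card
    ((wireGraph (openGraph Ω ω) B).comap (Subtype.val : Ω.verts → ℤ × ℤ)).ConnectedComponent

/-- The boundary `∂Ω`: vertices of `Ω` adjacent in `𝕃` to a vertex outside `Ω`. -/
def bdry (Ω : FinSubL) : Set (ℤ × ℤ) :=
  {v | v ∈ Ω.verts ∧ ∃ u, LGraph.Adj v u ∧ u ∉ Ω.verts}

/-- The local ATRC edge weights for `J < U`. -/
def aWt (J U : ℝ) : Bool → Bool → ℝ
  | false, false => Real.exp (-2 * (J + U))
  | true, false => 0
  | false, true => Real.exp (-4 * J) - Real.exp (-2 * (J + U))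
  | true, true => 1 - Real.exp (-4 * J)

/-- The local ATRC edge weights for `J ≥ U`. -/
def aWt' (J U : ℝ) : Bool → Bool → ℝ
  | false, false => Real.exp (-4 * J)
  | true, false => Real.exp (-2 * (J + U)) - Real.exp (-4 * J)
  | false, true => Real.exp (-2 * (J + U)) - Real.exp (-4 * J)
  | true, true => 1 - 2 * Real.exp (-2 * (J + U)) + Real.exp (-4 * J)

/-- The (unnormalized) ATRC weight, with cluster-counting functions `k1, k2` encoding
the boundary conditions, using local weights `a`. -/
def atrcWtGen (a : Bool → Bool → ℝ) (Ω : FinSubL) (k1 k2 : Cfg Ω → ℕ)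
    (ω : Cfg Ω × Cfg Ω) : ℝ :=
  2 ^ k1 ω.1 * 2 ^ k2 ω.2 * ∏ e : Ω.edges, a (ω.1 e) (ω.2 e)

/-- ATRC probability of an event `A`, with local weights `a`. -/
def atrcProbGen (a : Bool → Bool → ℝ) (Ω : FinSubL) (k1 k2 : Cfg Ω → ℕ)
    (A : Set (Cfg Ω × Cfg Ω)) : ℝ :=
  (∑ ω : Cfg Ω × Cfg Ω, if ω ∈ A then atrcWtGen a Ω k1 k2 ω else 0) /
    (∑ ω : Cfg Ω × Cfg Ω, atrcWtGen a Ω k1 k2 ω)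

/-- ATRC probability (`J < U` regime). -/
def atrcProb (J U : ℝ) (Ω : FinSubL) (k1 k2 : Cfg Ω → ℕ) (A : Set (Cfg Ω × Cfg Ω)) : ℝ :=
  atrcProbGen (aWt J U) Ω k1 k2 A

/-- ATRC probability with wired/wired boundary conditions (`J < U` regime). -/
def atrcProb11 (J U : ℝ) (Ω : FinSubL) (A : Set (Cfg Ω × Cfg Ω)) : ℝ :=
  atrcProb J U Ω (kWired Ω (bdry Ω)) (kWired Ω (bdry Ω)) A

/-- ATRC probability with free/free boundary conditions (`J < U` regime). -/
def atrcProb00 (J U : ℝ) (Ω : FinSubL) (A : Set (Cfg Ω × Cfg Ω)) : ℝ :=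
  atrcProbGen (aWt J U) Ω (kFree Ω) (kFree Ω) A

/-- The event that `x` is connected to the set `S` by a path of `ω`-open edges. -/
def connTo (Ω : FinSubL) (ω : Cfg Ω) (x : ℤ × ℤ) (S : Set (ℤ × ℤ)) : Prop :=
  ∃ y ∈ S, (openGraph Ω ω).Reachable x y

/-- The box `Λ_n = {u ∈ 𝕃 : ‖u‖₁ ≤ 2n}`. -/
def Lbox (n : ℕ) : Finset (ℤ × ℤ) :=
  (Finset.Icc (-(2 * n : ℤ), -(2 * n : ℤ)) ((2 * n : ℤ), (2 * n : ℤ))).filter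
    fun u => isLV u ∧ u.1.natAbs + u.2.natAbs ≤ 2 * n

/-- The boundary `∂Λ_n = {u ∈ 𝕃 : ‖u‖₁ = 2n}`. -/
def LboxBdry (n : ℕ) : Set (ℤ × ℤ) := {u | isLV u ∧ u.1.natAbs + u.2.natAbs = 2 * n}

/-- `Ω` contains the vertex set `V` together with all `𝕃`-edges between its vertices. -/
def containsBox (Ω : FinSubL) (V : Finset (ℤ × ℤ)) : Prop :=
  (∀ v ∈ V, v ∈ Ω.verts) ∧
    ∀ u v : ℤ × ℤ, u ∈ V → v ∈ V → LGraph.Adj u v → s(u, v) ∈ Ω.edges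

end ATRCPaper

namespace ATRCPaper

/-! ### Auxiliary: component counting -/
section Graphs
open SimpleGraph
variable {V : Type*} [Finite V]

noncomputable def ncomp (G : SimpleGraph V) : ℕ := Nat.card G.ConnectedComponent

omit [Finite V] in
lemma map_surj {G G' : SimpleGraph V} (h : G ≤ G') :
    Function.Surjective (ConnectedComponent.map (Hom.ofLE h)) := by
  intro C
  exact C.ind fun v => ⟨G.connectedComponentMk v, rfl⟩

lemma ncomp_mono {G G' : SimpleGraph V} (h : G ≤ G') : ncomp G' ≤ ncomp G :=
  Nat.card_le_card_of_surjective _ (map_surj h)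

omit [Finite V] in
lemma reach_sup_edge {G : SimpleGraph V} {u v x y : V}
    (h : (G ⊔ edge u v).Reachable x y) :
    G.Reachable x y ∨ (G.Reachable x u ∧ G.Reachable v y) ∨
      (G.Reachable x v ∧ G.Reachable u y) := by
  obtain ⟨w⟩ := h
  induction w with
  | nil => exact Or.inl (Reachable.refl _)
  | @cons a b y hadj p ih =>
    rcases hadj with hG | hE
    · have hab : G.Reachable a b := hG.reachable
      rcases ih with h | ⟨h1, h2⟩ | ⟨h1, h2⟩
      · exact Or.inl (hab.trans h)
      · exact Or.inr (Or.inl ⟨hab.trans h1, h2⟩)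
      · exact Or.inr (Or.inr ⟨hab.trans h1, h2⟩)
    · rw [edge_adj] at hE
      obtain ⟨⟨rfl, rfl⟩ | ⟨rfl, rfl⟩, hne⟩ := hE
      · rcases ih with h | ⟨h1, h2⟩ | ⟨h1, h2⟩
        · exact Or.inr (Or.inl ⟨Reachable.refl _, h⟩)
        · exact Or.inr (Or.inl ⟨Reachable.refl _, h2⟩)
        · exact Or.inl h2
      · rcases ih with h | ⟨h1, h2⟩ | ⟨h1, h2⟩
        · exact Or.inr (Or.inr ⟨Reachable.refl _, h⟩)
        · exact Or.inl h2
        · exact Or.inr (Or.inr ⟨Reachable.refl _, h2⟩)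

lemma ncomp_sup_edge_eq {G : SimpleGraph V} {u v : V} (h : G.Reachable u v) :
    ncomp (G ⊔ edge u v) = ncomp G := by
  refine (Nat.card_eq_of_bijective (ConnectedComponent.map (Hom.ofLE le_sup_left))
    ⟨?_, map_surj le_sup_left⟩).symm
  intro C D
  refine ConnectedComponent.ind₂ (fun x y hxy => ?_) C D
  simp only [ConnectedComponent.map_mk, Hom.ofLE_apply, id] at hxy
  have hr := ConnectedComponent.exact hxy
  rcases reach_sup_edge hr with h' | ⟨h1, h2⟩ | ⟨h1, h2⟩
  · exact ConnectedComponent.sound h'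
  · exact ConnectedComponent.sound ((h1.trans h).trans h2)
  · exact ConnectedComponent.sound ((h1.trans h.symm).trans h2)

lemma ncomp_le_sup_edge_add_one {G : SimpleGraph V} (u v : V) :
    ncomp G ≤ ncomp (G ⊔ edge u v) + 1 := by
  classical
  have hinj : Function.Injective (fun C : G.ConnectedComponent =>
      if C = G.connectedComponentMk u then (none : Option (G ⊔ edge u v).ConnectedComponent)
      else some (C.map (Hom.ofLE le_sup_left))) := by
    intro C D hCD
    obtain ⟨x, rfl⟩ := C.exists_rep
    obtain ⟨y, rfl⟩ := D.exists_rep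
    by_cases hC : Quot.mk _ x = G.connectedComponentMk u <;>
      by_cases hD : Quot.mk _ y = G.connectedComponentMk u <;>
      simp only [hC, hD, if_pos, if_neg, if_true, if_false] at hCD
    · rw [hC, hD]
    · exact absurd hCD (by simp; exact hD)
    · exact absurd hCD (by simp; exact hC)
    · have hxy := Option.some_injective _ ((if_neg hC).symm.trans (hCD.trans (if_neg hD)))
      have hr : (G ⊔ edge u v).Reachable x y := ConnectedComponent.exact hxy
      rcases reach_sup_edge hr with h' | ⟨h1, h2⟩ | ⟨h1, h2⟩
      · exact ConnectedComponent.sound h'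
      · exact absurd (ConnectedComponent.sound h1) hC
      · exact absurd (ConnectedComponent.sound h2.symm) hD
  haveI : Finite (G ⊔ edge u v).ConnectedComponent := Quot.finite _
  haveI : Finite G.ConnectedComponent := Quot.finite _
  letI : Fintype (G ⊔ edge u v).ConnectedComponent := Fintype.ofFinite _
  letI : Fintype G.ConnectedComponent := Fintype.ofFinite _
  have := Nat.card_le_card_of_injective _ hinj
  unfold ncomp
  rw [Nat.card_eq_fintype_card, Nat.card_eq_fintype_card]
  rw [Nat.card_eq_fintype_card (α := Option _), Fintype.card_option,
    Nat.card_eq_fintype_card] at this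
  exact this

lemma ncomp_sup_edge_lt {G : SimpleGraph V} {u v : V} (hne : u ≠ v)
    (h : ¬ G.Reachable u v) : ncomp (G ⊔ edge u v) < ncomp G := by
  classical
  haveI : Finite (G ⊔ edge u v).ConnectedComponent := Quot.finite _
  haveI : Finite G.ConnectedComponent := Quot.finite _
  letI : Fintype G.ConnectedComponent := Fintype.ofFinite _
  letI : Fintype (G ⊔ edge u v).ConnectedComponent := Fintype.ofFinite _
  have hni : ¬ Function.Injective
      (ConnectedComponent.map (Hom.ofLE (le_sup_left : G ≤ G ⊔ edge u v))) := by
    intro hinj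
    have hadj : (G ⊔ edge u v).Adj u v := Or.inr (by rw [edge_adj]; exact ⟨Or.inl ⟨rfl, rfl⟩, hne⟩)
    have : G.connectedComponentMk u = G.connectedComponentMk v := by
      apply hinj
      simp only [ConnectedComponent.map_mk, Hom.ofLE_apply, id]
      exact ConnectedComponent.sound hadj.reachable
    exact h (ConnectedComponent.exact this)
  have := Fintype.card_lt_of_surjective_not_injective _ (map_surj le_sup_left) hni
  unfold ncomp
  rw [Nat.card_eq_fintype_card, Nat.card_eq_fintype_card]
  exact this

end Graphs

/-! ### Supermodularity of the wired cluster count -/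
section Supermod
open SimpleGraph
variable (Ω : FinSubL) (B : Set (ℤ × ℤ))

def grW (ω : Cfg Ω) : SimpleGraph Ω.verts :=
  (wireGraph (openGraph Ω ω) B).comap (Subtype.val : Ω.verts → ℤ × ℤ)

lemma kWired_eq_ncomp (ω : Cfg Ω) : kWired Ω B ω = ncomp (grW Ω B ω) := rfl

lemma grW_mono {ω ω' : Cfg Ω} (h : ω ≤ ω') : grW Ω B ω ≤ grW Ω B ω' := by
  intro a b hab
  obtain ⟨hne, hor⟩ : _ ≠ _ ∧ _ := hab
  refine ⟨hne, ?_⟩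
  rcases hor with ⟨hne2, e, he, hev⟩ | hB
  · exact Or.inl ⟨hne2, e, Bool.le_iff_imp.mp (h e) he, hev⟩
  · exact Or.inr hB

lemma exists_endpoints (e : Ω.edges) :
    ∃ x y : Ω.verts, (x : ℤ × ℤ) ≠ (y : ℤ × ℤ) ∧
      (e : Sym2 (ℤ × ℤ)) = s((x : ℤ × ℤ), (y : ℤ × ℤ)) := by
  obtain ⟨E, hE⟩ := e
  induction E with
  | _ a b =>
    have hadj : LGraph.Adj a b := (LGraph.mem_edgeSet).mp (Ω.edges_mem _ hE)
    have ha : a ∈ Ω.verts := Ω.edges_sub _ hE a (Sym2.mem_mk_left a b)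
    have hb : b ∈ Ω.verts := Ω.edges_sub _ hE b (Sym2.mem_mk_right a b)
    exact ⟨⟨a, ha⟩, ⟨b, hb⟩, hadj.ne, rfl⟩

lemma grW_update {e : Ω.edges} {x y : Ω.verts} (hxy : (x : ℤ × ℤ) ≠ (y : ℤ × ℤ))
    (he : (e : Sym2 (ℤ × ℤ)) = s((x : ℤ × ℤ), (y : ℤ × ℤ))) {ω : Cfg Ω} (hωe : ω e = false) :
    grW Ω B (Function.update ω e true) = grW Ω B ω ⊔ edge x y := by
  ext a b
  simp only [grW, comap_adj, sup_adj, edge_adj, wireGraph, openGraph]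
  constructor
  · rintro ⟨hne, ⟨-, f, hf, hfv⟩ | hB⟩
    · by_cases hfe : f = e
      · subst hfe
        rw [he] at hfv
        rw [Sym2.eq_iff] at hfv
        refine Or.inr ⟨?_, fun h => hne (congrArg Subtype.val h)⟩
        rcases hfv with ⟨h1, h2⟩ | ⟨h1, h2⟩
        · exact Or.inl ⟨Subtype.ext h1.symm, Subtype.ext h2.symm⟩
        · exact Or.inr ⟨Subtype.ext h2.symm, Subtype.ext h1.symm⟩
      · rw [Function.update_of_ne hfe] at hf
        exact Or.inl ⟨hne, Or.inl ⟨hne, f, hf, hfv⟩⟩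
    · exact Or.inl ⟨hne, Or.inr hB⟩
  · rintro (⟨hne, hor⟩ | ⟨hcase, hne⟩)
    · refine ⟨hne, ?_⟩
      rcases hor with ⟨hne2, f, hf, hfv⟩ | hB
      · refine Or.inl ⟨hne2, f, ?_, hfv⟩
        by_cases hfe : f = e
        · subst hfe; simp
        · rwa [Function.update_of_ne hfe]
      · exact Or.inr hB
    · have hne' : (a : ℤ × ℤ) ≠ (b : ℤ × ℤ) := fun h => hne (Subtype.ext h)
      refine ⟨hne', Or.inl ⟨hne', e, by simp, ?_⟩⟩
      rw [he]
      rcases hcase with ⟨rfl, rfl⟩ | ⟨rfl, rfl⟩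
      · rfl
      · exact Sym2.eq_swap

lemma kW_SM1 {σ σ' : Cfg Ω} (hle : σ ≤ σ') (e : Ω.edges) (he' : σ' e = false) :
    kWired Ω B (Function.update σ e true) + kWired Ω B σ' ≤
      kWired Ω B σ + kWired Ω B (Function.update σ' e true) := by
  have heσ : σ e = false := by
    have := Bool.le_iff_imp.mp (hle e)
    cases h : σ e
    · rfl
    · rw [this h] at he'; exact absurd he' (by simp)
  obtain ⟨x, y, hxy, hev⟩ := exists_endpoints Ω e
  rw [kWired_eq_ncomp, kWired_eq_ncomp, kWired_eq_ncomp, kWired_eq_ncomp,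
    grW_update Ω B hxy hev heσ, grW_update Ω B hxy hev he']
  by_cases hreach : (grW Ω B σ').Reachable x y
  · have h1 : ncomp (grW Ω B σ' ⊔ SimpleGraph.edge x y) = ncomp (grW Ω B σ') :=
      ncomp_sup_edge_eq hreach
    have h2 : ncomp (grW Ω B σ ⊔ SimpleGraph.edge x y) ≤ ncomp (grW Ω B σ) :=
      ncomp_mono le_sup_left
    omega
  · have hreach' : ¬ (grW Ω B σ).Reachable x y := fun h =>
      hreach (h.mono (grW_mono Ω B hle))
    have hxy' : x ≠ y := fun h => hxy (congrArg Subtype.val h)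
    have h1 : ncomp (grW Ω B σ ⊔ SimpleGraph.edge x y) < ncomp (grW Ω B σ) :=
      ncomp_sup_edge_lt hxy' hreach'
    have h2 : ncomp (grW Ω B σ') ≤ ncomp (grW Ω B σ' ⊔ SimpleGraph.edge x y) + 1 :=
      ncomp_le_sup_edge_add_one x y
    omega

lemma binf : ∀ a b : Bool, a ⊓ b = (a && b) := by decide
lemma bsup : ∀ a b : Bool, a ⊔ b = (a || b) := by decide

lemma kW_supermod_aux : ∀ (D : Finset Ω.edges) (ω ω' : Cfg Ω),
    D = Finset.univ.filter (fun e : Ω.edges => ω e = true ∧ ω' e = false) →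
    kWired Ω B ω + kWired Ω B ω' ≤ kWired Ω B (ω ⊓ ω') + kWired Ω B (ω ⊔ ω') := by
  classical
  intro D
  induction D using Finset.strongInduction with
  | _ D ih =>
  intro ω ω' hD
  by_cases hDe : D = ∅
  · have hle : ω ≤ ω' := by
      intro e
      rw [Bool.le_iff_imp]
      intro h
      by_contra hc
      have h1 : ω e = true ∧ ω' e = false := ⟨h, by cases h' : ω' e; rfl; exact absurd h' hc⟩
      have : e ∈ D := by rw [hD]; simp [h1]
      rw [hDe] at this
      simp at this
    rw [inf_eq_left.mpr hle, sup_eq_right.mpr hle]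
  · obtain ⟨e, heD⟩ := Finset.nonempty_iff_ne_empty.mpr hDe
    have he : ω e = true ∧ ω' e = false := by
      rw [hD] at heD; simpa using heD
    set ω₂ := Function.update ω e false with hω₂
    have hωeq : ω = Function.update ω₂ e true := by
      funext f
      by_cases hf : f = e
      · subst hf; simp [hω₂, he.1]
      · simp [hω₂, Function.update_of_ne hf]
    have hinf : ω ⊓ ω' = ω₂ ⊓ ω' := by
      funext f
      by_cases hf : f = e
      · subst hf; simp [Pi.inf_apply, hω₂, he.1, he.2, binf]
      · simp [Pi.inf_apply, hω₂, Function.update_of_ne hf]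
    have hsup : ω ⊔ ω' = Function.update (ω₂ ⊔ ω') e true := by
      funext f
      by_cases hf : f = e
      · subst hf; simp [Pi.sup_apply, hω₂, he.1, he.2, bsup]
      · simp [Pi.sup_apply, hω₂, Function.update_of_ne hf]
    have hsupe : (ω₂ ⊔ ω') e = false := by
      simp [Pi.sup_apply, hω₂, he.2, bsup]
    have hSM1 := kW_SM1 Ω B (le_sup_left : ω₂ ≤ ω₂ ⊔ ω') e hsupe
    rw [← hωeq] at hSM1
    have hD2 : Finset.univ.filter (fun f : Ω.edges => ω₂ f = true ∧ ω' f = false)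
        = D.erase e := by
      rw [hD]
      ext f
      by_cases hf : f = e
      · subst hf; simp [hω₂]
      · simp [Function.update_of_ne hf, hω₂, hf]
    have hIH := ih (D.erase e) (Finset.erase_ssubset heD) ω₂ ω' hD2.symm
    rw [hinf, hsup]
    omega

lemma kW_supermod (ω ω' : Cfg Ω) :
    kWired Ω B ω + kWired Ω B ω' ≤ kWired Ω B (ω ⊓ ω') + kWired Ω B (ω ⊔ ω') :=
  kW_supermod_aux Ω B _ ω ω' rfl

end Supermod
end ATRCPaper

namespace ATRCPaper

/-- Expectation of an observable under an ATRC measure. -/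
def atrcExpGen (a : Bool → Bool → ℝ) (Ω : FinSubL) (k1 k2 : Cfg Ω → ℕ)
    (f : Cfg Ω × Cfg Ω → ℝ) : ℝ :=
  (∑ ω : Cfg Ω × Cfg Ω, atrcWtGen a Ω k1 k2 ω * f ω) /
    (∑ ω : Cfg Ω × Cfg Ω, atrcWtGen a Ω k1 k2 ω)

/-- Covariance of two observables under an ATRC measure. -/
def atrcCovGen (a : Bool → Bool → ℝ) (Ω : FinSubL) (k1 k2 : Cfg Ω → ℕ)
    (f g : Cfg Ω × Cfg Ω → ℝ) : ℝ :=
  atrcExpGen a Ω k1 k2 (fun ω => f ω * g ω) -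
    atrcExpGen a Ω k1 k2 f * atrcExpGen a Ω k1 k2 g

/-- An increasing event on pairs of configurations. -/
def IncrPair (Ω : FinSubL) (A : Set (Cfg Ω × Cfg Ω)) : Prop :=
  ∀ x y : Cfg Ω × Cfg Ω, x ∈ A → x.1 ≤ y.1 → x.2 ≤ y.2 → y ∈ A

/-- The indicator function of an event. -/
def ind {α : Type*} (A : Set α) : α → ℝ := fun x => if x ∈ A then 1 else 0


/-! ### FKG inequality for the ATRC measure -/
section FKG
variable (a : Bool → Bool → ℝ) (Ω : FinSubL) (B : Set (ℤ × ℤ))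

lemma atrcWt_nonneg (ha0 : ∀ b1 b2, 0 ≤ a b1 b2) (k1 k2 : Cfg Ω → ℕ) (ω : Cfg Ω × Cfg Ω) :
    0 ≤ atrcWtGen a Ω k1 k2 ω := by
  refine mul_nonneg (mul_nonneg (by positivity) (by positivity)) ?_
  exact Finset.prod_nonneg fun e _ => ha0 _ _

lemma atrcWt_supermod (ha0 : ∀ b1 b2, 0 ≤ a b1 b2)
    (hsm : ∀ b1 b1' b2 b2', a b1 b2 * a b1' b2' ≤
      a (b1 ⊓ b1') (b2 ⊓ b2') * a (b1 ⊔ b1') (b2 ⊔ b2'))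
    (x y : Cfg Ω × Cfg Ω) :
    atrcWtGen a Ω (kWired Ω B) (kWired Ω B) x * atrcWtGen a Ω (kWired Ω B) (kWired Ω B) y ≤
      atrcWtGen a Ω (kWired Ω B) (kWired Ω B) (x ⊓ y) *
        atrcWtGen a Ω (kWired Ω B) (kWired Ω B) (x ⊔ y) := by
  have h2 : (1:ℝ) ≤ 2 := one_le_two
  have hp1 : (2:ℝ) ^ kWired Ω B x.1 * 2 ^ kWired Ω B y.1 ≤
      2 ^ kWired Ω B ((x ⊓ y).1) * 2 ^ kWired Ω B ((x ⊔ y).1) := by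
    rw [← pow_add, ← pow_add]
    exact pow_le_pow_right₀ h2 (kW_supermod Ω B x.1 y.1)
  have hp2 : (2:ℝ) ^ kWired Ω B x.2 * 2 ^ kWired Ω B y.2 ≤
      2 ^ kWired Ω B ((x ⊓ y).2) * 2 ^ kWired Ω B ((x ⊔ y).2) := by
    rw [← pow_add, ← pow_add]
    exact pow_le_pow_right₀ h2 (kW_supermod Ω B x.2 y.2)
  have hpe : (∏ e : Ω.edges, a (x.1 e) (x.2 e)) * (∏ e : Ω.edges, a (y.1 e) (y.2 e)) ≤
      (∏ e : Ω.edges, a ((x ⊓ y).1 e) ((x ⊓ y).2 e)) *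
        (∏ e : Ω.edges, a ((x ⊔ y).1 e) ((x ⊔ y).2 e)) := by
    rw [← Finset.prod_mul_distrib, ← Finset.prod_mul_distrib]
    refine Finset.prod_le_prod (fun e _ => mul_nonneg (ha0 _ _) (ha0 _ _)) (fun e _ => ?_)
    exact hsm (x.1 e) (y.1 e) (x.2 e) (y.2 e)
  unfold atrcWtGen
  have e1 : (2:ℝ) ^ kWired Ω B x.1 * 2 ^ kWired Ω B x.2 * (∏ e : Ω.edges, a (x.1 e) (x.2 e)) *
      ((2:ℝ) ^ kWired Ω B y.1 * 2 ^ kWired Ω B y.2 * ∏ e : Ω.edges, a (y.1 e) (y.2 e)) =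
      ((2:ℝ) ^ kWired Ω B x.1 * 2 ^ kWired Ω B y.1) *
      ((2:ℝ) ^ kWired Ω B x.2 * 2 ^ kWired Ω B y.2) *
      ((∏ e : Ω.edges, a (x.1 e) (x.2 e)) * ∏ e : Ω.edges, a (y.1 e) (y.2 e)) := by ring
  have e2 : (2:ℝ) ^ kWired Ω B ((x ⊓ y).1) * 2 ^ kWired Ω B ((x ⊓ y).2) *
      (∏ e : Ω.edges, a ((x ⊓ y).1 e) ((x ⊓ y).2 e)) *
      ((2:ℝ) ^ kWired Ω B ((x ⊔ y).1) * 2 ^ kWired Ω B ((x ⊔ y).2) *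
      ∏ e : Ω.edges, a ((x ⊔ y).1 e) ((x ⊔ y).2 e)) =
      ((2:ℝ) ^ kWired Ω B ((x ⊓ y).1) * 2 ^ kWired Ω B ((x ⊔ y).1)) *
      ((2:ℝ) ^ kWired Ω B ((x ⊓ y).2) * 2 ^ kWired Ω B ((x ⊔ y).2)) *
      ((∏ e : Ω.edges, a ((x ⊓ y).1 e) ((x ⊓ y).2 e)) *
        ∏ e : Ω.edges, a ((x ⊔ y).1 e) ((x ⊔ y).2 e)) := by ring
  rw [e1, e2]
  have hxne : (0:ℝ) ≤ (∏ e : Ω.edges, a (x.1 e) (x.2 e)) * ∏ e : Ω.edges, a (y.1 e) (y.2 e) :=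
    mul_nonneg (Finset.prod_nonneg fun e _ => ha0 _ _) (Finset.prod_nonneg fun e _ => ha0 _ _)
  refine mul_le_mul (mul_le_mul hp1 hp2 (by positivity) (by positivity)) hpe hxne (by positivity)

lemma cov_nonneg (ha0 : ∀ b1 b2, 0 ≤ a b1 b2)
    (hsm : ∀ b1 b1' b2 b2', a b1 b2 * a b1' b2' ≤
      a (b1 ⊓ b1') (b2 ⊓ b2') * a (b1 ⊔ b1') (b2 ⊔ b2'))
    (hZ : 0 < ∑ ω : Cfg Ω × Cfg Ω, atrcWtGen a Ω (kWired Ω B) (kWired Ω B) ω)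
    (f g : Cfg Ω × Cfg Ω → ℝ) (hf0 : ∀ ω, 0 ≤ f ω) (hg0 : ∀ ω, 0 ≤ g ω)
    (hf : Monotone f) (hg : Monotone g) :
    0 ≤ atrcCovGen a Ω (kWired Ω B) (kWired Ω B) f g := by
  set μ := atrcWtGen a Ω (kWired Ω B) (kWired Ω B) with hμ
  have hfkg := fkg (f := f) (g := g) (μ := μ) (fun ω => atrcWt_nonneg a Ω ha0 _ _ ω)
    hf0 hg0 hf hg (atrcWt_supermod a Ω B ha0 hsm)
  have hZZ : (0:ℝ) < (∑ ω : Cfg Ω × Cfg Ω, μ ω) * ∑ ω : Cfg Ω × Cfg Ω, μ ω :=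
    mul_pos hZ hZ
  rw [atrcCovGen, sub_nonneg, atrcExpGen, atrcExpGen, atrcExpGen, div_mul_div_comm,
    div_le_div_iff₀ hZZ hZ]
  calc (∑ ω : Cfg Ω × Cfg Ω, μ ω * f ω) * (∑ ω : Cfg Ω × Cfg Ω, μ ω * g ω) *
        (∑ ω : Cfg Ω × Cfg Ω, μ ω)
      ≤ ((∑ ω : Cfg Ω × Cfg Ω, μ ω) * ∑ ω : Cfg Ω × Cfg Ω, μ ω * (f ω * g ω)) *
        (∑ ω : Cfg Ω × Cfg Ω, μ ω) := by
        exact mul_le_mul_of_nonneg_right hfkg hZ.le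
    _ = (∑ ω : Cfg Ω × Cfg Ω, μ ω * (f ω * g ω)) *
        ((∑ ω : Cfg Ω × Cfg Ω, μ ω) * ∑ ω : Cfg Ω × Cfg Ω, μ ω) := by ring

end FKG

/-! ### Calculus helpers -/
section CalcHelpers

def E2f (J β : ℝ) : ℝ := Real.exp (-(4*J)*β)
def E1f (J U β : ℝ) : ℝ := Real.exp (-(2*(J+U))*β)
def Tf (J U β : ℝ) : ℝ := Real.exp (-(2*(U-J))*β)
def lam2 (J U β : ℝ) : ℝ := 2*(U-J) / (1 - Tf J U β)
def lam1 (J U β : ℝ) : ℝ := 4*J*E2f J β/(1 - E2f J β) + 2*(J+U) - lam2 J U β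
def glocal (J U β : ℝ) (b1 b2 : Bool) : ℝ :=
  -(2*(J+U)) + (if b1 then lam1 J U β else 0) + (if b2 then lam2 J U β else 0)
def aD (J U β : ℝ) : Bool → Bool → ℝ
  | false, false => -(2*(J+U)) * E1f J U β
  | true, false => 0
  | false, true => -(4*J) * E2f J β + (2*(J+U)) * E1f J U β
  | true, true => 4*J * E2f J β

variable {J U : ℝ}

lemma aWt_ff (β : ℝ) : aWt (β*J) (β*U) false false = E1f J U β := by
  show Real.exp (-2*(β*J + β*U)) = _
  rw [E1f]; congr 1; ring

lemma aWt_tf (β : ℝ) : aWt (β*J) (β*U) true false = 0 := rfl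

lemma aWt_ft (β : ℝ) : aWt (β*J) (β*U) false true = E2f J β - E1f J U β := by
  show Real.exp (-4*(β*J)) - Real.exp (-2*(β*J + β*U)) = _
  rw [E1f, E2f]; congr 2 <;> ring

lemma aWt_tt (β : ℝ) : aWt (β*J) (β*U) true true = 1 - E2f J β := by
  show 1 - Real.exp (-4*(β*J)) = _
  rw [E2f]; congr 2; ring

lemma hd_lin (c β : ℝ) : HasDerivAt (fun x : ℝ => Real.exp (c*x)) (c * Real.exp (c*β)) β := by
  have h := ((hasDerivAt_id' β).const_mul c).exp
  convert h using 1
  ring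

lemma hd_E1 (β : ℝ) : HasDerivAt (E1f J U) (-(2*(J+U)) * E1f J U β) β := hd_lin _ β

lemma hd_E2 (β : ℝ) : HasDerivAt (E2f J) (-(4*J) * E2f J β) β := hd_lin _ β

lemma hd_aWt (b1 b2 : Bool) (β : ℝ) :
    HasDerivAt (fun x : ℝ => aWt (x*J) (x*U) b1 b2) (aD J U β b1 b2) β := by
  cases b1 <;> cases b2
  · rw [show (fun x : ℝ => aWt (x*J) (x*U) false false) = E1f J U from funext fun x => aWt_ff x]
    exact hd_E1 β
  · rw [show (fun x : ℝ => aWt (x*J) (x*U) false true)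
      = fun x => E2f J x - E1f J U x from funext fun x => aWt_ft x]
    have := (hd_E2 (J := J) β).sub (hd_E1 (J := J) (U := U) β)
    refine this.congr_deriv ?_
    symm
    show -(4*J) * E2f J β + (2*(J+U)) * E1f J U β = _
    ring
  · rw [show (fun x : ℝ => aWt (x*J) (x*U) true false) = fun _ => (0:ℝ)
      from funext fun x => aWt_tf x]
    exact hasDerivAt_const β 0
  · rw [show (fun x : ℝ => aWt (x*J) (x*U) true true)
      = fun x => 1 - E2f J x from funext fun x => aWt_tt x]
    have := (hasDerivAt_const β (1:ℝ)).sub (hd_E2 (J := J) β)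
    refine this.congr_deriv ?_
    symm
    show 4*J * E2f J β = _
    ring

lemma E2_lt_one (hJ : 0 < J) {β : ℝ} (hβ : 0 < β) : E2f J β < 1 := by
  rw [E2f, ← Real.exp_zero]
  exact Real.exp_lt_exp.mpr (by nlinarith)

lemma Tf_lt_one (hJU : J < U) {β : ℝ} (hβ : 0 < β) : Tf J U β < 1 := by
  rw [Tf, ← Real.exp_zero]
  exact Real.exp_lt_exp.mpr (by nlinarith)

lemma E1_eq (J U β : ℝ) : E1f J U β = E2f J β * Tf J U β := by
  rw [E1f, E2f, Tf, ← Real.exp_add]; congr 1; ring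

lemma aD_eq_glocal (hJ : 0 < J) (hJU : J < U) {β : ℝ} (hβ : 0 < β) (b1 b2 : Bool) :
    aD J U β b1 b2 = glocal J U β b1 b2 * aWt (β*J) (β*U) b1 b2 := by
  have hE2 : E2f J β < 1 := E2_lt_one hJ hβ
  have hT : Tf J U β < 1 := Tf_lt_one hJU hβ
  have hE2ne : 1 - E2f J β ≠ 0 := by linarith [hE2]
  have hTne : 1 - Tf J U β ≠ 0 := by linarith [hT]
  cases b1 <;> cases b2
  · rw [aWt_ff]
    simp only [aD, glocal]
    norm_num
  · simp only [aD, glocal, lam2]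
    norm_num
    rw [aWt_ft, E1_eq]
    field_simp
    ring
  · rw [aWt_tf]
    simp [aD, glocal]
  · rw [aWt_tt]
    simp only [aD, glocal, lam1, lam2]
    norm_num
    field_simp
    ring

lemma aWt_nonneg' (hJ : 0 < J) (hJU : J < U) {β : ℝ} (hβ : 0 < β) (b1 b2 : Bool) :
    0 ≤ aWt (β*J) (β*U) b1 b2 := by
  have hE2 : E2f J β < 1 := E2_lt_one hJ hβ
  have hT : Tf J U β < 1 := Tf_lt_one hJU hβ
  have hE2pos : 0 < E2f J β := Real.exp_pos _
  have hTpos : 0 < Tf J U β := Real.exp_pos _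
  have hE1 : E1f J U β = E2f J β * Tf J U β := E1_eq J U β
  cases b1 <;> cases b2
  · rw [aWt_ff]; exact (Real.exp_pos _).le
  · rw [aWt_ft, hE1]; nlinarith
  · rw [aWt_tf]
  · rw [aWt_tt]; linarith

lemma aWt_supermod' (hJ : 0 < J) (hJU : J < U) {β : ℝ} (hβ : 0 < β)
    (b1 b1' b2 b2' : Bool) :
    aWt (β*J) (β*U) b1 b2 * aWt (β*J) (β*U) b1' b2' ≤
      aWt (β*J) (β*U) (b1 ⊓ b1') (b2 ⊓ b2') * aWt (β*J) (β*U) (b1 ⊔ b1') (b2 ⊔ b2') := by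
  have hE2 : E2f J β < 1 := E2_lt_one hJ hβ
  have hT : Tf J U β < 1 := Tf_lt_one hJU hβ
  have hE2pos : 0 < E2f J β := Real.exp_pos _
  have hTpos : 0 < Tf J U β := Real.exp_pos _
  have hE1 : E1f J U β = E2f J β * Tf J U β := E1_eq J U β
  have hE1pos : 0 < E1f J U β := Real.exp_pos _
  have hE1E2 : E1f J U β ≤ E2f J β := by rw [hE1]; nlinarith
  cases b1 <;> cases b1' <;> cases b2 <;> cases b2' <;>
    simp only [binf, bsup, Bool.and_false, Bool.and_true, Bool.false_and, Bool.true_and,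
      Bool.or_false, Bool.or_true, Bool.false_or, Bool.true_or, aWt_ff, aWt_tf, aWt_ft,
      aWt_tt] <;> nlinarith

end CalcHelpers

section Bounds
variable {J U : ℝ}

lemma lam2_ge (hJU : J < U) {β : ℝ} (hβ : 0 < β) : 2*(U-J) ≤ lam2 J U β := by
  have hT : Tf J U β < 1 := Tf_lt_one hJU hβ
  have hTpos : 0 < Tf J U β := Real.exp_pos _
  rw [lam2, le_div_iff₀ (by linarith)]
  nlinarith

set_option maxHeartbeats 1000000 in
lemma lam1_ge (hJ : 0 < J) (hJU : J < U) {ε β : ℝ} (hε : 0 < ε) (hβ1 : ε ≤ β)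
    (hβ2 : β ≤ ε⁻¹) : ε * ((2*ε*(U-J))/(4+2*ε*(U-J))) ≤ lam1 J U β := by
  have hβ : 0 < β := lt_of_lt_of_le hε hβ1
  have hUJ : 0 < U - J := sub_pos.mpr hJU
  set x := 4*J*β with hx
  set y := 2*(U-J)*β with hy
  have hxpos : 0 < x := by rw [hx]; positivity
  have hypos : 0 < y := by rw [hy]; positivity
  have hE2x : E2f J β = Real.exp (-x) := by rw [E2f]; congr 1; rw [hx]; ring
  have hTy : Tf J U β = Real.exp (-y) := by rw [Tf]; congr 1; rw [hy]; ring
  have hE2lt : Real.exp (-x) < 1 := by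
    rw [← Real.exp_zero]; exact Real.exp_lt_exp.mpr (by linarith)
  have hTlt : Real.exp (-y) < 1 := by
    rw [← Real.exp_zero]; exact Real.exp_lt_exp.mpr (by linarith)
  have hE2pos : 0 < Real.exp (-x) := Real.exp_pos _
  have hTpos : 0 < Real.exp (-y) := Real.exp_pos _
  have hblam : β * lam1 J U β =
      x*Real.exp (-x)/(1-Real.exp (-x)) + (x+y) - y/(1-Real.exp (-y)) := by
    rw [lam1, lam2, hE2x, hTy]
    have h1 : 1 - Real.exp (-x) ≠ 0 := by linarith
    have h2 : 1 - Real.exp (-y) ≠ 0 := by linarith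
    field_simp
    rw [hx, hy]
    ring
  have hA : 1 ≤ x*Real.exp (-x)/(1-Real.exp (-x)) + x := by
    have h1 : 1 - x ≤ Real.exp (-x) := by linarith [Real.add_one_le_exp (-x)]
    have h2 : Real.exp (-x) ≤ x*Real.exp (-x)/(1-Real.exp (-x)) := by
      rw [le_div_iff₀ (by linarith)]
      nlinarith
    linarith
  have hq : (1 + y/2)^2 ≤ Real.exp y := by
    have h1 := Real.add_one_le_exp (y/2)
    have h2 : Real.exp (y/2) * Real.exp (y/2) = Real.exp y := by
      rw [← Real.exp_add]; congr 1; ring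
    nlinarith [Real.exp_pos (y/2)]
  have hTe : Real.exp (-y) * Real.exp y = 1 := by
    rw [← Real.exp_add]; simp
  have hB : y*Real.exp (-y)/(1-Real.exp (-y)) ≤ 4/(4+y) := by
    rw [div_le_div_iff₀ (by linarith) (by linarith)]
    nlinarith [mul_le_mul_of_nonneg_left hq hTpos.le]
  have hsplit : y - y/(1-Real.exp (-y)) = -(y*Real.exp (-y)/(1-Real.exp (-y))) := by
    have h2 : 1 - Real.exp (-y) ≠ 0 := by linarith
    field_simp
    ring
  have h14 : 1 - 4/(4+y) = y/(4+y) := by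
    have : (4:ℝ)+y ≠ 0 := by linarith
    field_simp
    ring
  have hfin : y/(4+y) ≤ β * lam1 J U β := by
    rw [hblam]
    have hexp : x*Real.exp (-x)/(1-Real.exp (-x)) + (x+y) - y/(1-Real.exp (-y))
        = (x*Real.exp (-x)/(1-Real.exp (-x)) + x) + (y - y/(1-Real.exp (-y))) := by ring
    rw [hexp, hsplit]
    linarith
  have hyy : (2*ε*(U-J))/(4+2*ε*(U-J)) ≤ y/(4+y) := by
    have hy0 : 0 < 2*ε*(U-J) := by positivity
    have hyge : 2*ε*(U-J) ≤ y := by rw [hy]; nlinarith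
    rw [div_le_div_iff₀ (by linarith) (by linarith)]
    nlinarith
  have hεβ : ε * β ≤ 1 := by
    have h := mul_le_mul_of_nonneg_left hβ2 hε.le
    rwa [mul_inv_cancel₀ (ne_of_gt hε)] at h
  have hδle : (2*ε*(U-J))/(4+2*ε*(U-J)) ≤ β * lam1 J U β := le_trans hyy hfin
  have hδpos : 0 < (2*ε*(U-J))/(4+2*ε*(U-J)) := by positivity
  nlinarith [mul_nonneg hδpos.le (sub_nonneg.mpr hεβ), hδle, hβ]

end Bounds

section DFormula

lemma d_formula (a : Bool → Bool → ℝ) (Ω : FinSubL) (k1 k2 : Cfg Ω → ℕ)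
    (A : Set (Cfg Ω × Cfg Ω)) (c0 c1 c2 : ℝ) (gl : Bool → Bool → ℝ)
    (hgl : ∀ b1 b2, gl b1 b2 = c0 + (if b1 then c1 else 0) + (if b2 then c2 else 0))
    (hZ : (∑ ω : Cfg Ω × Cfg Ω, atrcWtGen a Ω k1 k2 ω) ≠ 0) :
    ((∑ ω : Cfg Ω × Cfg Ω, if ω ∈ A then atrcWtGen a Ω k1 k2 ω *
        ∑ e : Ω.edges, gl (ω.1 e) (ω.2 e) else 0) *
      (∑ ω : Cfg Ω × Cfg Ω, atrcWtGen a Ω k1 k2 ω) -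
     (∑ ω : Cfg Ω × Cfg Ω, if ω ∈ A then atrcWtGen a Ω k1 k2 ω else 0) *
      (∑ ω : Cfg Ω × Cfg Ω, atrcWtGen a Ω k1 k2 ω *
        ∑ e : Ω.edges, gl (ω.1 e) (ω.2 e))) /
      (∑ ω : Cfg Ω × Cfg Ω, atrcWtGen a Ω k1 k2 ω)^2
    = ∑ e : Ω.edges,
        (c1 * atrcCovGen a Ω k1 k2 (ind A) (fun ω => if ω.1 e then 1 else 0) +
         c2 * atrcCovGen a Ω k1 k2 (ind A) (fun ω => if ω.2 e then 1 else 0)) := by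
  classical
  have hcov : ∀ f g : Cfg Ω × Cfg Ω → ℝ, atrcCovGen a Ω k1 k2 f g =
      ((∑ ω : Cfg Ω × Cfg Ω, atrcWtGen a Ω k1 k2 ω * (f ω * g ω)) *
        (∑ ω : Cfg Ω × Cfg Ω, atrcWtGen a Ω k1 k2 ω) -
       (∑ ω : Cfg Ω × Cfg Ω, atrcWtGen a Ω k1 k2 ω * f ω) *
        (∑ ω : Cfg Ω × Cfg Ω, atrcWtGen a Ω k1 k2 ω * g ω)) /
      (∑ ω : Cfg Ω × Cfg Ω, atrcWtGen a Ω k1 k2 ω)^2 := by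
    intro f g
    rw [atrcCovGen, atrcExpGen, atrcExpGen, atrcExpGen]
    field_simp
  have hN : (∑ ω : Cfg Ω × Cfg Ω, if ω ∈ A then atrcWtGen a Ω k1 k2 ω else 0)
      = ∑ ω : Cfg Ω × Cfg Ω, atrcWtGen a Ω k1 k2 ω * ind A ω := by
    refine Finset.sum_congr rfl (fun ω _ => ?_)
    by_cases hω : ω ∈ A <;> simp [ind, hω]
  have hNd : (∑ ω : Cfg Ω × Cfg Ω, if ω ∈ A then atrcWtGen a Ω k1 k2 ω *
        ∑ e : Ω.edges, gl (ω.1 e) (ω.2 e) else 0)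
      = ∑ e : Ω.edges, (c0 * (∑ ω : Cfg Ω × Cfg Ω, atrcWtGen a Ω k1 k2 ω * ind A ω)
          + c1 * (∑ ω : Cfg Ω × Cfg Ω,
              atrcWtGen a Ω k1 k2 ω * (ind A ω * (if ω.1 e then 1 else 0)))
          + c2 * (∑ ω : Cfg Ω × Cfg Ω,
              atrcWtGen a Ω k1 k2 ω * (ind A ω * (if ω.2 e then 1 else 0)))) := by
    rw [show (∑ ω : Cfg Ω × Cfg Ω, if ω ∈ A then atrcWtGen a Ω k1 k2 ω *
        ∑ e : Ω.edges, gl (ω.1 e) (ω.2 e) else 0)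
      = ∑ ω : Cfg Ω × Cfg Ω, ∑ e : Ω.edges,
          (if ω ∈ A then atrcWtGen a Ω k1 k2 ω * gl (ω.1 e) (ω.2 e) else 0) from
      Finset.sum_congr rfl (fun ω _ => by
        by_cases hω : ω ∈ A
        · simp only [if_pos hω, Finset.mul_sum]
        · simp only [if_neg hω, Finset.sum_const_zero])]
    rw [Finset.sum_comm]
    refine Finset.sum_congr rfl (fun e _ => ?_)
    have hpt : ∀ ω : Cfg Ω × Cfg Ω,
        (if ω ∈ A then atrcWtGen a Ω k1 k2 ω * gl (ω.1 e) (ω.2 e) else 0)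
        = c0 * (atrcWtGen a Ω k1 k2 ω * ind A ω)
          + c1 * (atrcWtGen a Ω k1 k2 ω * (ind A ω * (if ω.1 e then 1 else 0)))
          + c2 * (atrcWtGen a Ω k1 k2 ω * (ind A ω * (if ω.2 e then 1 else 0))) := by
      intro ω
      rw [hgl]
      by_cases hω : ω ∈ A <;> cases h1 : ω.1 e <;> cases h2 : ω.2 e <;>
        simp [ind, hω, h1, h2] <;> ring
    rw [Finset.sum_congr rfl (fun ω _ => hpt ω), Finset.sum_add_distrib,
      Finset.sum_add_distrib, ← Finset.mul_sum, ← Finset.mul_sum, ← Finset.mul_sum]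
  have hZd : (∑ ω : Cfg Ω × Cfg Ω, atrcWtGen a Ω k1 k2 ω *
        ∑ e : Ω.edges, gl (ω.1 e) (ω.2 e))
      = ∑ e : Ω.edges, (c0 * (∑ ω : Cfg Ω × Cfg Ω, atrcWtGen a Ω k1 k2 ω)
          + c1 * (∑ ω : Cfg Ω × Cfg Ω, atrcWtGen a Ω k1 k2 ω * (if ω.1 e then 1 else 0))
          + c2 * (∑ ω : Cfg Ω × Cfg Ω, atrcWtGen a Ω k1 k2 ω * (if ω.2 e then 1 else 0))) := by
    rw [show (∑ ω : Cfg Ω × Cfg Ω, atrcWtGen a Ω k1 k2 ω * ∑ e : Ω.edges, gl (ω.1 e) (ω.2 e))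
      = ∑ ω : Cfg Ω × Cfg Ω, ∑ e : Ω.edges, atrcWtGen a Ω k1 k2 ω * gl (ω.1 e) (ω.2 e) from
      Finset.sum_congr rfl (fun ω _ => Finset.mul_sum _ _ _)]
    rw [Finset.sum_comm]
    refine Finset.sum_congr rfl (fun e _ => ?_)
    have hpt : ∀ ω : Cfg Ω × Cfg Ω, atrcWtGen a Ω k1 k2 ω * gl (ω.1 e) (ω.2 e)
        = c0 * atrcWtGen a Ω k1 k2 ω
          + c1 * (atrcWtGen a Ω k1 k2 ω * (if ω.1 e then 1 else 0))
          + c2 * (atrcWtGen a Ω k1 k2 ω * (if ω.2 e then 1 else 0)) := by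
      intro ω
      rw [hgl]
      cases h1 : ω.1 e <;> cases h2 : ω.2 e <;> simp [h1, h2] <;> ring
    rw [Finset.sum_congr rfl (fun ω _ => hpt ω), Finset.sum_add_distrib,
      Finset.sum_add_distrib, ← Finset.mul_sum, ← Finset.mul_sum, ← Finset.mul_sum]
  rw [hN, hNd, hZd, Finset.sum_mul,
    Finset.mul_sum _ _ (∑ ω : Cfg Ω × Cfg Ω, atrcWtGen a Ω k1 k2 ω * ind A ω),
    ← Finset.sum_sub_distrib, Finset.sum_div]
  refine Finset.sum_congr rfl (fun e _ => ?_)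
  rw [hcov (ind A) (fun ω => if ω.1 e then 1 else 0),
    hcov (ind A) (fun ω => if ω.2 e then 1 else 0)]
  field_simp
  ring

end DFormula


set_option maxHeartbeats 2000000

/-- `J < U`. The derivative in `β` of the wired ATRC probability of an
increasing event is bounded below by a constant times the sum of the edge covariances. -/
theorem derivative_lower_bound (J U ε : ℝ) (hJ : 0 < J) (hJU : J < U) (hε : 0 < ε) :
    ∃ c : ℝ, 0 < c ∧
      ∀ (Ω : FinSubL) (A : Set (Cfg Ω × Cfg Ω)), IncrPair Ω A →
        ∀ β₀ : ℝ, ε ≤ β₀ → β₀ ≤ ε⁻¹ →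
          ∃ d : ℝ,
            HasDerivAt
              (fun β => atrcProbGen (aWt (β * J) (β * U)) Ω
                (kWired Ω (bdry Ω)) (kWired Ω (bdry Ω)) A) d β₀ ∧
            c * ∑ e : Ω.edges,
                (atrcCovGen (aWt (β₀ * J) (β₀ * U)) Ω (kWired Ω (bdry Ω)) (kWired Ω (bdry Ω))
                    (ind A) (fun ω => if ω.1 e then 1 else 0) +
                  atrcCovGen (aWt (β₀ * J) (β₀ * U)) Ω (kWired Ω (bdry Ω)) (kWired Ω (bdry Ω))
                    (ind A) (fun ω => if ω.2 e then 1 else 0)) ≤ d := by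
  classical
  have hUJ : 0 < U - J := sub_pos.mpr hJU
  refine ⟨min (ε * ((2*ε*(U-J))/(4+2*ε*(U-J)))) (2*(U-J)),
    lt_min (by positivity) (by positivity), ?_⟩
  intro Ω A hA β₀ hβ1 hβ2
  have hβ : 0 < β₀ := lt_of_lt_of_le hε hβ1
  have hW : ∀ ω : Cfg Ω × Cfg Ω,
      HasDerivAt (fun β => atrcWtGen (aWt (β*J) (β*U)) Ω (kWired Ω (bdry Ω))
          (kWired Ω (bdry Ω)) ω)
        (atrcWtGen (aWt (β₀*J) (β₀*U)) Ω (kWired Ω (bdry Ω)) (kWired Ω (bdry Ω)) ω *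
          ∑ e : Ω.edges, glocal J U β₀ (ω.1 e) (ω.2 e)) β₀ := by
    intro ω
    have hp : HasDerivAt (fun β => ∏ e : Ω.edges, aWt (β*J) (β*U) (ω.1 e) (ω.2 e))
        (∑ e : Ω.edges, (∏ f ∈ Finset.univ.erase e, aWt (β₀*J) (β₀*U) (ω.1 f) (ω.2 f)) •
          aD J U β₀ (ω.1 e) (ω.2 e)) β₀ :=
      HasDerivAt.fun_finsetProd (fun e _ => hd_aWt (ω.1 e) (ω.2 e) β₀)
    have heq : (∑ e : Ω.edges, (∏ f ∈ Finset.univ.erase e, aWt (β₀*J) (β₀*U) (ω.1 f) (ω.2 f)) •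
          aD J U β₀ (ω.1 e) (ω.2 e))
        = (∏ e : Ω.edges, aWt (β₀*J) (β₀*U) (ω.1 e) (ω.2 e)) *
          ∑ e : Ω.edges, glocal J U β₀ (ω.1 e) (ω.2 e) := by
      rw [Finset.mul_sum]
      refine Finset.sum_congr rfl (fun e _ => ?_)
      rw [smul_eq_mul, aD_eq_glocal hJ hJU hβ,
        ← Finset.mul_prod_erase Finset.univ _ (Finset.mem_univ e)]
      ring
    rw [heq] at hp
    have h2 := hp.const_mul
      ((2:ℝ) ^ kWired Ω (bdry Ω) ω.1 * 2 ^ kWired Ω (bdry Ω) ω.2)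
    refine h2.congr_deriv ?_
    simp only [atrcWtGen]
    ring
  have ha0 : ∀ b1 b2, 0 ≤ aWt (β₀*J) (β₀*U) b1 b2 := aWt_nonneg' hJ hJU hβ
  have hZpos : 0 < ∑ ω : Cfg Ω × Cfg Ω,
      atrcWtGen (aWt (β₀*J) (β₀*U)) Ω (kWired Ω (bdry Ω)) (kWired Ω (bdry Ω)) ω := by
    have hle := Finset.single_le_sum
      (f := fun ω : Cfg Ω × Cfg Ω =>
        atrcWtGen (aWt (β₀*J) (β₀*U)) Ω (kWired Ω (bdry Ω)) (kWired Ω (bdry Ω)) ω)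
      (fun ω _ => atrcWt_nonneg _ Ω ha0 _ _ ω)
      (Finset.mem_univ ((fun _ => true, fun _ => true) : Cfg Ω × Cfg Ω))
    refine lt_of_lt_of_le ?_ hle
    unfold atrcWtGen
    refine mul_pos (mul_pos (by positivity) (by positivity))
      (Finset.prod_pos fun e _ => ?_)
    show (0:ℝ) < aWt (β₀*J) (β₀*U) true true
    rw [aWt_tt]
    have := E2_lt_one (J := J) hJ hβ
    linarith
  have hNd : HasDerivAt
      (fun β => ∑ ω : Cfg Ω × Cfg Ω, if ω ∈ A then
        atrcWtGen (aWt (β*J) (β*U)) Ω (kWired Ω (bdry Ω)) (kWired Ω (bdry Ω)) ω else 0)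
      (∑ ω : Cfg Ω × Cfg Ω, if ω ∈ A then
        atrcWtGen (aWt (β₀*J) (β₀*U)) Ω (kWired Ω (bdry Ω)) (kWired Ω (bdry Ω)) ω *
          ∑ e : Ω.edges, glocal J U β₀ (ω.1 e) (ω.2 e) else 0) β₀ := by
    refine HasDerivAt.fun_sum (fun ω _ => ?_)
    by_cases hω : ω ∈ A
    · simp only [if_pos hω]; exact hW ω
    · simp only [if_neg hω]; exact hasDerivAt_const β₀ 0
  have hZd : HasDerivAt
      (fun β => ∑ ω : Cfg Ω × Cfg Ω,
        atrcWtGen (aWt (β*J) (β*U)) Ω (kWired Ω (bdry Ω)) (kWired Ω (bdry Ω)) ω)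
      (∑ ω : Cfg Ω × Cfg Ω,
        atrcWtGen (aWt (β₀*J) (β₀*U)) Ω (kWired Ω (bdry Ω)) (kWired Ω (bdry Ω)) ω *
          ∑ e : Ω.edges, glocal J U β₀ (ω.1 e) (ω.2 e)) β₀ :=
    HasDerivAt.fun_sum (fun ω _ => hW ω)
  have hdiv := hNd.div hZd (ne_of_gt hZpos)
  refine ⟨((∑ ω : Cfg Ω × Cfg Ω, if ω ∈ A then
        atrcWtGen (aWt (β₀*J) (β₀*U)) Ω (kWired Ω (bdry Ω)) (kWired Ω (bdry Ω)) ω *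
          ∑ e : Ω.edges, glocal J U β₀ (ω.1 e) (ω.2 e) else 0) *
      (∑ ω : Cfg Ω × Cfg Ω, atrcWtGen (aWt (β₀*J) (β₀*U)) Ω (kWired Ω (bdry Ω)) (kWired Ω (bdry Ω)) ω) -
     (∑ ω : Cfg Ω × Cfg Ω, if ω ∈ A then atrcWtGen (aWt (β₀*J) (β₀*U)) Ω (kWired Ω (bdry Ω)) (kWired Ω (bdry Ω)) ω else 0) *
      (∑ ω : Cfg Ω × Cfg Ω, atrcWtGen (aWt (β₀*J) (β₀*U)) Ω (kWired Ω (bdry Ω)) (kWired Ω (bdry Ω)) ω *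
          ∑ e : Ω.edges, glocal J U β₀ (ω.1 e) (ω.2 e))) /
      (∑ ω : Cfg Ω × Cfg Ω, atrcWtGen (aWt (β₀*J) (β₀*U)) Ω (kWired Ω (bdry Ω)) (kWired Ω (bdry Ω)) ω)^2, ?_, ?_⟩
  · simp only [atrcProbGen]
    exact hdiv
  · have hdf := d_formula (aWt (β₀*J) (β₀*U)) Ω (kWired Ω (bdry Ω)) (kWired Ω (bdry Ω)) A
      (-(2*(J+U))) (lam1 J U β₀) (lam2 J U β₀) (glocal J U β₀)
      (fun b1 b2 => rfl) (ne_of_gt hZpos)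
    rw [hdf, Finset.mul_sum]
    refine Finset.sum_le_sum (fun e _ => ?_)
    have hsm : ∀ b1 b1' b2 b2' : Bool, aWt (β₀*J) (β₀*U) b1 b2 * aWt (β₀*J) (β₀*U) b1' b2' ≤
        aWt (β₀*J) (β₀*U) (b1 ⊓ b1') (b2 ⊓ b2') * aWt (β₀*J) (β₀*U) (b1 ⊔ b1') (b2 ⊔ b2') :=
      aWt_supermod' hJ hJU hβ
    have hindmono : Monotone (ind A) := by
      intro x y hxy
      unfold ind
      by_cases hx : x ∈ A
      · rw [if_pos hx, if_pos (hA x y hx (Prod.le_def.mp hxy).1 (Prod.le_def.mp hxy).2)]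
      · rw [if_neg hx]
        by_cases hy : y ∈ A <;> simp [hy]
    have hind0 : ∀ ω, 0 ≤ ind A ω := by
      intro ω
      unfold ind
      by_cases hω : ω ∈ A <;> simp [hω]
    have hι0 : ∀ (g : Cfg Ω × Cfg Ω → Bool) (ω), (0:ℝ) ≤ if g ω then 1 else 0 := by
      intro g ω
      by_cases h : g ω <;> simp [h]
    have hι1mono : Monotone (fun ω : Cfg Ω × Cfg Ω => if ω.1 e then (1:ℝ) else 0) := by
      intro x y hxy
      dsimp only
      have h := Bool.le_iff_imp.mp ((Prod.le_def.mp hxy).1 e)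
      cases h1 : x.1 e
      · by_cases h2 : y.1 e = true <;> simp [h1, h2]
      · simp [h1, h h1]
    have hι2mono : Monotone (fun ω : Cfg Ω × Cfg Ω => if ω.2 e then (1:ℝ) else 0) := by
      intro x y hxy
      dsimp only
      have h := Bool.le_iff_imp.mp ((Prod.le_def.mp hxy).2 e)
      cases h1 : x.2 e
      · by_cases h2 : y.2 e = true <;> simp [h1, h2]
      · simp [h1, h h1]
    have hcov1 : 0 ≤ atrcCovGen (aWt (β₀*J) (β₀*U)) Ω (kWired Ω (bdry Ω)) (kWired Ω (bdry Ω))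
        (ind A) (fun ω => if ω.1 e then 1 else 0) :=
      cov_nonneg _ Ω (bdry Ω) ha0 hsm hZpos (ind A) _ hind0 (hι0 _) hindmono hι1mono
    have hcov2 : 0 ≤ atrcCovGen (aWt (β₀*J) (β₀*U)) Ω (kWired Ω (bdry Ω)) (kWired Ω (bdry Ω))
        (ind A) (fun ω => if ω.2 e then 1 else 0) :=
      cov_nonneg _ Ω (bdry Ω) ha0 hsm hZpos (ind A) _ hind0 (hι0 _) hindmono hι2mono
    have hl1 : min (ε * ((2*ε*(U-J))/(4+2*ε*(U-J)))) (2*(U-J)) ≤ lam1 J U β₀ :=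
      le_trans (min_le_left _ _) (lam1_ge hJ hJU hε hβ1 hβ2)
    have hl2 : min (ε * ((2*ε*(U-J))/(4+2*ε*(U-J)))) (2*(U-J)) ≤ lam2 J U β₀ :=
      le_trans (min_le_right _ _) (lam2_ge hJU hβ)
    nlinarith [mul_le_mul_of_nonneg_right hl1 hcov1, mul_le_mul_of_nonneg_right hl2 hcov2]


end ATRCPaper
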